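/- Fix an integer J ≥ 1 and reals α > 0, Σ₀ > 0. For x > 0, let P₀(x,·) denote the law of G / (Σ₀ + Z²/(2x)), where G ~ Gamma(α + J/2, 1) and Z ~ N(0,1) are independent. Then for all positive x and y, d_TV(P₀(x,·), P₀(y,·)) ≤ |x − y| / max{x, y}. -/

import Mathlib

/-!
Write `Z / √x ~ N(0, 1/x)`: then `P₀(x,·)` is the image of `Gamma ⊗ N(0, 1/x)` under one fixed
map. For `x ≤ y` the density of `N(0, 1/x)` dominates `√(x/y)` times that of `N(0, 1/y)`, so
`√(x/y) • P₀(y,·) ≤ P₀(x,·)`. A probability measure dominating `c` times another lies within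
total variation `1 - c` of it, and `1 - √(x/y) ≤ 1 - x/y`.
-/

open MeasureTheory ProbabilityTheory
open scoped ENNReal

/-- Total variation distance between two measures:
the supremum over measurable sets `A` of `|μ A - ν A|`. -/
noncomputable def tvDist {χ : Type*} [MeasurableSpace χ] (μ ν : Measure χ) : ℝ :=
  ⨆ A : {s : Set χ // MeasurableSet s}, |(μ A.1).toReal - (ν A.1).toReal|

/-- The transition kernel `P₀(x,·)` of the Normal Gibbs sampler with `K = 0`:
the law of `G / (S₀ + Z²/(2x))` where `G ~ Gamma(α + J/2, 1)` and `Z ~ N(0,1)`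
are independent. -/
noncomputable def gibbsP0 (J : ℕ) (α S₀ : ℝ) (x : ℝ) : Measure ℝ :=
  ((gammaMeasure (α + J / 2) 1).prod (gaussianReal 0 1)).map
    (fun gz => gz.1 / (S₀ + gz.2 ^ 2 / (2 * x)))

open Real NNReal

section TotalVariation

variable {χ : Type*} [MeasurableSpace χ]

lemma tvDist_comm (μ ν : Measure χ) : tvDist μ ν = tvDist ν μ := by
  simp only [tvDist, abs_sub_comm]

variable {μ ν : Measure χ} [IsProbabilityMeasure μ] [IsProbabilityMeasure ν] {c : ℝ}

lemma measureReal_sub_le_of_smul_le (hc : 0 ≤ c) (h : ENNReal.ofReal c • ν ≤ μ) (s : Set χ) :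
    ν.real s - μ.real s ≤ 1 - c := by
  have hdom : ∀ t, c * ν.real t ≤ μ.real t := fun t => by
    simpa [measureReal_def, ENNReal.toReal_mul, ENNReal.toReal_ofReal hc] using
      ENNReal.toReal_mono (measure_ne_top μ t) (h t)
  have hc1 : c ≤ 1 := by simpa using hdom Set.univ
  nlinarith [hdom s, measureReal_le_one (μ := ν) (s := s)]

lemma tvDist_le_one_sub_of_smul_le (hc : 0 ≤ c) (h : ENNReal.ofReal c • ν ≤ μ) :
    tvDist μ ν ≤ 1 - c := by
  refine ciSup_le fun ⟨s, hs⟩ => abs_sub_le_iff.2 ⟨?_, measureReal_sub_le_of_smul_le hc h s⟩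
  have := measureReal_sub_le_of_smul_le hc h sᶜ
  rwa [probReal_compl_eq_one_sub hs, probReal_compl_eq_one_sub hs, sub_sub_sub_cancel_left] at this

end TotalVariation

section Gaussian

lemma sqrt_div_mul_gaussianPDFReal_le (m : ℝ) {v w : ℝ≥0} (hv : v ≠ 0) (hvw : v ≤ w) (z : ℝ) :
    √(v / w) * gaussianPDFReal m v z ≤ gaussianPDFReal m w z := by
  have hv' : (0 : ℝ) < v := by positivity
  have hw' : (0 : ℝ) < w := hv'.trans_le hvw
  have hcoef : √(v / w) * (√(2 * π * v))⁻¹ = (√(2 * π * w))⁻¹ := by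
    rw [← Real.sqrt_inv, ← Real.sqrt_inv, ← Real.sqrt_mul (by positivity)]
    congr 1
    field_simp
  rw [gaussianPDFReal, gaussianPDFReal, ← mul_assoc, hcoef]
  gcongr _ * rexp ?_
  rw [neg_div, neg_div, neg_le_neg_iff]
  gcongr

lemma smul_gaussianReal_le (m : ℝ) {v w : ℝ≥0} (hv : v ≠ 0) (hvw : v ≤ w) :
    ENNReal.ofReal √(v / w) • gaussianReal m v ≤ gaussianReal m w := by
  have hw : w ≠ 0 := (pos_iff_ne_zero.2 hv |>.trans_le hvw).ne'
  rw [gaussianReal_of_var_ne_zero _ hv, gaussianReal_of_var_ne_zero _ hw,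
    ← withDensity_smul _ (measurable_gaussianPDF _ _)]
  refine withDensity_mono (Filter.Eventually.of_forall fun z => ?_)
  simp only [Pi.smul_apply, smul_eq_mul, gaussianPDF]
  rw [← ENNReal.ofReal_mul (Real.sqrt_nonneg _)]
  exact ENNReal.ofReal_le_ofReal (sqrt_div_mul_gaussianPDFReal_le m hv hvw z)

end Gaussian

instance sFinite_gammaMeasure (a r : ℝ) : SFinite (gammaMeasure a r) := by
  unfold gammaMeasure
  infer_instance

section GibbsKernel

variable (J : ℕ) (α S₀ : ℝ)

lemma measurable_div_add_sq_div (c : ℝ) :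
    Measurable fun gz : ℝ × ℝ => gz.1 / (S₀ + gz.2 ^ 2 / c) := by
  fun_prop

lemma isProbabilityMeasure_gibbsP0 (hα : 0 < α) (x : ℝ) :
    IsProbabilityMeasure (gibbsP0 J α S₀ x) :=
  have := isProbabilityMeasure_gammaMeasure (by positivity : 0 < α + J / 2) one_pos
  Measure.isProbabilityMeasure_map (measurable_div_add_sq_div S₀ _).aemeasurable

lemma gibbsP0_eq_map_prod_gaussianReal {x : ℝ} (hx : 0 < x) :
    gibbsP0 J α S₀ x = ((gammaMeasure (α + J / 2) 1).prod (gaussianReal 0 x.toNNReal⁻¹)).map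
      (fun gz => gz.1 / (S₀ + gz.2 ^ 2 / 2)) := by
  have hscale : (gaussianReal 0 1).map ((√x)⁻¹ * ·) = gaussianReal 0 x.toNNReal⁻¹ := by
    rw [gaussianReal_map_const_mul, mul_zero]
    congr
    ext
    simp [Real.sq_sqrt hx.le, Real.coe_toNNReal _ hx.le]
  have hmeas : Measurable ((√x)⁻¹ * · : ℝ → ℝ) := measurable_const_mul _
  rw [gibbsP0, ← hscale, ← Measure.map_id (μ := gammaMeasure _ _),
    Measure.map_prod_map _ _ measurable_id hmeas, Measure.map_id,
    Measure.map_map (measurable_div_add_sq_div S₀ 2) (measurable_id.prodMap hmeas)]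
  congr 1
  funext ⟨g, z⟩
  simp only [Function.comp_apply, Prod.map_apply, id_eq, mul_pow, inv_pow,
    Real.sq_sqrt hx.le]
  ring

lemma smul_gibbsP0_le {x y : ℝ} (hx : 0 < x) (hxy : x ≤ y) :
    ENNReal.ofReal √(x / y) • gibbsP0 J α S₀ y ≤ gibbsP0 J α S₀ x := by
  have hy : 0 < y := hx.trans_le hxy
  have hgauss := smul_gaussianReal_le 0 (v := y.toNNReal⁻¹) (w := x.toNNReal⁻¹)
    (by simpa using hy) (by gcongr)
  simp only [NNReal.coe_inv, Real.coe_toNNReal _ hx.le, Real.coe_toNNReal _ hy.le,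
    inv_div_inv] at hgauss
  rw [gibbsP0_eq_map_prod_gaussianReal J α S₀ hx, gibbsP0_eq_map_prod_gaussianReal J α S₀ hy,
    ← Measure.map_smul, ← Measure.prod_smul_right]
  exact Measure.map_mono (Measure.prod_mono le_rfl hgauss) (measurable_div_add_sq_div S₀ 2)

end GibbsKernel

theorem stmt7_general (J : ℕ) (α S₀ : ℝ) (hα : 0 < α)
    (x y : ℝ) (hx : 0 < x) (hy : 0 < y) :
    tvDist (gibbsP0 J α S₀ x) (gibbsP0 J α S₀ y) ≤ |x - y| / max x y := by
  have := isProbabilityMeasure_gibbsP0 J α S₀ hα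
  wlog hxy : x ≤ y generalizing x y
  · rw [tvDist_comm, abs_sub_comm, max_comm]
    exact this y x hy hx (le_of_not_ge hxy)
  have hdiv : 0 ≤ x / y := by positivity
  have hdiv_le_sqrt : x / y ≤ √(x / y) :=
    (Real.le_sqrt hdiv hdiv).2 (pow_le_of_le_one hdiv ((div_le_one hy).2 hxy) two_ne_zero)
  calc tvDist (gibbsP0 J α S₀ x) (gibbsP0 J α S₀ y)
      ≤ 1 - √(x / y) :=
        tvDist_le_one_sub_of_smul_le (Real.sqrt_nonneg _) (smul_gibbsP0_le J α S₀ hx hxy)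
    _ ≤ 1 - x / y := by linarith
    _ = |x - y| / max x y := by
      rw [abs_sub_comm, abs_of_nonneg (sub_nonneg.2 hxy), max_eq_right hxy]
      field_simp

/-- `d_TV(P₀(x,·), P₀(y,·)) ≤ |x − y| / max{x, y}` for all
positive `x, y`. -/
theorem stmt7 (J : ℕ) (hJ : 1 ≤ J) (α S₀ : ℝ) (hα : 0 < α) (hS₀ : 0 < S₀)
    (x y : ℝ) (hx : 0 < x) (hy : 0 < y) :
    tvDist (gibbsP0 J α S₀ x) (gibbsP0 J α S₀ y) ≤ |x - y| / max x y :=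
  stmt7_general J α S₀ hα x y hx hy
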